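/- arXiv:math/0503321 — 4 statements merged into one kernel-verified Lean document; each statement's English description precedes it below -/
import Mathlib

section
/- In the setting of the hyperbolic semigroup splitting, if F: H → H is globally bounded and globally Lipschitz with constant L satisfying L(μ_{m+1}^{−1} − μ_m^{−1}) < 1, then the map M: B(Ω,H) → B(Ω,H) on the Banach space of bounded maps Z: Ω → H with supremum norm, defined by M(Z)(ω) := ∫_{−∞}^0 T_{−s} p⁺ F(Z(θ(s,ω)) + Y₁(θ(s,ω))) ds − ∫_0^∞ T_{−s} p⁻ F(Z(θ(s,ω)) + Y₁(θ(s,ω))) ds (for a fixed map Y₁: Ω → H), is a strict contraction with contraction constant μ := L(μ_{m+1}^{−1} − μ_m^{−1}) < 1, and hence has a unique fixed point Z₀ ∈ B(Ω,H). -/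
/-!
The operator norms of `T_{-s}p⁺` on `s ≤ 0` and of `T_{-s}p⁻` on `s ≥ 0` are dominated by
exponentials whose integrals are `μ_{m+1}⁻¹` and `-μ_m⁻¹`. Hence the two integrals defining `M`
are bounded by `(μ_{m+1}⁻¹ - μ_m⁻¹)` times a sup bound of their integrands: applied to `F` this
shows that `M` preserves bounded maps, and applied to differences of integrands, via the
Lipschitz bound on `F`, it shows that `M` contracts with constant `L (μ_{m+1}⁻¹ - μ_m⁻¹)`.
Bounded maps `Ω → H` form the Banach space `ℓ^∞(Ω, H)`, so Banach's fixed point theorem applies.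
-/

open MeasureTheory Set

section ExponentialBounds

variable {E : Type*} [NormedAddCommGroup E] [NormedSpace ℝ E]

theorem norm_setIntegral_Iic_le_of_norm_le_exp {b D : ℝ} (hb : 0 < b) {G : ℝ → E}
    (hG : ∀ s ≤ 0, ‖G s‖ ≤ Real.exp (s * b) * D) :
    ‖∫ s in Iic 0, G s‖ ≤ b⁻¹ * D := by
  simp_rw [mul_comm _ b] at hG
  calc ‖∫ s in Iic 0, G s‖ ≤ ∫ s in Iic 0, Real.exp (b * s) * D :=
        norm_integral_le_of_norm_le ((integrableOn_exp_mul_Iic hb 0).mul_const D)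
          ((ae_restrict_iff' measurableSet_Iic).2 (.of_forall hG))
    _ = b⁻¹ * D := by
        rw [integral_mul_const, integral_exp_mul_Iic hb, mul_zero, Real.exp_zero, one_div]

theorem norm_setIntegral_Ici_le_of_norm_le_exp {a D : ℝ} (ha : a < 0) {G : ℝ → E}
    (hG : ∀ s, 0 ≤ s → ‖G s‖ ≤ Real.exp (s * a) * D) :
    ‖∫ s in Ici 0, G s‖ ≤ -a⁻¹ * D := by
  simp_rw [mul_comm _ a] at hG
  have hint : IntegrableOn (fun s => Real.exp (a * s) * D) (Ici 0) :=
    (integrableOn_Ici_iff_integrableOn_Ioi).2 ((integrableOn_exp_mul_Ioi ha 0).mul_const D)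
  calc ‖∫ s in Ici 0, G s‖ ≤ ∫ s in Ici 0, Real.exp (a * s) * D :=
        norm_integral_le_of_norm_le hint ((ae_restrict_iff' measurableSet_Ici).2 (.of_forall hG))
    _ = -a⁻¹ * D := by
        rw [integral_mul_const, integral_Ici_eq_integral_Ioi, integral_exp_mul_Ioi ha, mul_zero,
          Real.exp_zero, neg_div, one_div]

end ExponentialBounds

section DichotomyIntegral

variable {E E' : Type*} [NormedAddCommGroup E] [NormedSpace ℝ E]
  [NormedAddCommGroup E'] [NormedSpace ℝ E']

-- `Tp s` and `Tm s` play the roles of `T_{-s} p⁺` and `T_{-s} p⁻`.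
noncomputable def dichotomyIntegral (Tp Tm : ℝ → E →L[ℝ] E') (g : ℝ → E) : E' :=
  (∫ s in Iic 0, Tp s (g s)) - ∫ s in Ici 0, Tm s (g s)

variable {Tp Tm : ℝ → E →L[ℝ] E'} {μm μm1 : ℝ}

theorem norm_dichotomyIntegral_le (hμm : μm < 0) (hμm1 : 0 < μm1)
    (hTp : ∀ s : ℝ, s ≤ 0 → ‖Tp s‖ ≤ Real.exp (s * μm1))
    (hTm : ∀ s : ℝ, 0 ≤ s → ‖Tm s‖ ≤ Real.exp (s * μm))
    {g : ℝ → E} {D : ℝ} (hg : ∀ s, ‖g s‖ ≤ D) :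
    ‖dichotomyIntegral Tp Tm g‖ ≤ (μm1⁻¹ - μm⁻¹) * D :=
  calc ‖dichotomyIntegral Tp Tm g‖
      ≤ ‖∫ s in Iic 0, Tp s (g s)‖ + ‖∫ s in Ici 0, Tm s (g s)‖ := norm_sub_le _ _
    _ ≤ μm1⁻¹ * D + -μm⁻¹ * D := add_le_add
        (norm_setIntegral_Iic_le_of_norm_le_exp hμm1 fun s hs =>
          (Tp s).le_of_opNorm_le_of_le (hTp s hs) (hg s))
        (norm_setIntegral_Ici_le_of_norm_le_exp hμm fun s hs =>
          (Tm s).le_of_opNorm_le_of_le (hTm s hs) (hg s))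
    _ = (μm1⁻¹ - μm⁻¹) * D := by ring

theorem dichotomyIntegral_sub {g₁ g₂ : ℝ → E}
    (hp₁ : IntegrableOn (fun s => Tp s (g₁ s)) (Iic 0))
    (hm₁ : IntegrableOn (fun s => Tm s (g₁ s)) (Ici 0))
    (hp₂ : IntegrableOn (fun s => Tp s (g₂ s)) (Iic 0))
    (hm₂ : IntegrableOn (fun s => Tm s (g₂ s)) (Ici 0)) :
    dichotomyIntegral Tp Tm g₁ - dichotomyIntegral Tp Tm g₂ =
      dichotomyIntegral Tp Tm fun s => g₁ s - g₂ s := by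
  simp only [dichotomyIntegral, map_sub]
  rw [sub_sub_sub_comm, integral_sub hp₁ hp₂, integral_sub hm₁ hm₂]

end DichotomyIntegral

section BoundedMaps

variable {Ω E : Type*} [NormedAddCommGroup E]

theorem memℓp_infty_iff_exists_norm_le {Z : Ω → E} :
    Memℓp Z ⊤ ↔ ∃ c, ∀ ω, ‖Z ω‖ ≤ c := by
  simp only [memℓp_infty_iff, bddAbove_def, forall_mem_range]

theorem existsUnique_bounded_fixedPoint_of_contraction [CompleteSpace E]
    (M : (Ω → E) → Ω → E) {q : ℝ} (hq : q < 1)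
    (hbdd : ∀ Z : Ω → E, (∃ c, ∀ ω, ‖Z ω‖ ≤ c) → ∃ c', ∀ ω, ‖M Z ω‖ ≤ c')
    (hlip : ∀ Z₁ Z₂ : Ω → E, (∃ c, ∀ ω, ‖Z₁ ω‖ ≤ c) → (∃ c, ∀ ω, ‖Z₂ ω‖ ≤ c) →
      ∀ K : ℝ, (∀ ω, ‖Z₁ ω - Z₂ ω‖ ≤ K) → ∀ ω, ‖M Z₁ ω - M Z₂ ω‖ ≤ q * K) :
    ∃! Z₀ : {Z : Ω → E // ∃ c, ∀ ω, ‖Z ω‖ ≤ c}, M Z₀.1 = Z₀.1 := by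
  have bdd (f : lp (fun _ : Ω => E) ⊤) : ∃ c, ∀ ω, ‖f ω‖ ≤ c :=
    ⟨‖f‖, lp.norm_apply_le_norm ENNReal.top_ne_zero f⟩
  let Φ (f : lp (fun _ : Ω => E) ⊤) : lp (fun _ : Ω => E) ⊤ :=
    ⟨M f, memℓp_infty_iff_exists_norm_le.2 (hbdd f (bdd f))⟩
  have hΦ : ContractingWith q.toNNReal Φ := by
    refine ⟨by simpa using hq, LipschitzWith.of_dist_le_mul fun f g => ?_⟩
    rw [dist_eq_norm, dist_eq_norm]
    refine lp.norm_le_of_forall_le (by positivity) fun ω => ?_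
    calc ‖M f ω - M g ω‖ ≤ q * ‖f - g‖ :=
          hlip f g (bdd f) (bdd g) _ (lp.norm_apply_le_norm ENNReal.top_ne_zero (f - g)) ω
      _ ≤ q.toNNReal * ‖f - g‖ := by gcongr; exact Real.le_coe_toNNReal q
  refine ⟨⟨_, bdd (ContractingWith.fixedPoint Φ hΦ)⟩,
    congrArg Subtype.val hΦ.fixedPoint_isFixedPt, ?_⟩
  rintro ⟨W, hW⟩ hfix
  have hw : Function.IsFixedPt Φ ⟨W, memℓp_infty_iff_exists_norm_le.2 hW⟩ := Subtype.ext hfix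
  exact Subtype.ext (congrArg Subtype.val (hΦ.fixedPoint_unique hw) :)

end BoundedMaps

/-- With `L(μ_{m+1}⁻¹ − μ_m⁻¹) < 1`, the map `M` on the Banach
space of bounded maps `Ω → H` is a strict contraction with constant
`μ = L(μ_{m+1}⁻¹ − μ_m⁻¹)` and hence has a unique fixed point.  Here `Tp s`
stands for `T_{-s}p⁺` and `Tm s` for `T_{-s}p⁻`. -/
theorem hyperbolic_integral_operator_contraction
    {Ω : Type*} {H : Type*} [NormedAddCommGroup H] [InnerProductSpace ℝ H]
    [CompleteSpace H]
    (θ : ℝ → Ω → Ω) (Tp Tm : ℝ → H →L[ℝ] H) (μm μm1 : ℝ)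
    (hμm : μm < 0) (hμm1 : 0 < μm1)
    (hTp : ∀ s : ℝ, s ≤ 0 → ‖Tp s‖ ≤ Real.exp (s * μm1))
    (hTm : ∀ s : ℝ, 0 ≤ s → ‖Tm s‖ ≤ Real.exp (s * μm))
    (F : H → H) (L : ℝ) (hL : 0 ≤ L)
    (hLip : ∀ v₁ v₂, ‖F v₁ - F v₂‖ ≤ L * ‖v₁ - v₂‖)
    (hFbd : ∃ C, ∀ v, ‖F v‖ ≤ C)
    (hcontr : L * (μm1⁻¹ - μm⁻¹) < 1)
    (Y₁ : Ω → H)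
    (M : (Ω → H) → Ω → H)
    (hM : ∀ Z : Ω → H, ∀ ω, M Z ω =
      (∫ s in Set.Iic (0:ℝ), Tp s (F (Z (θ s ω) + Y₁ (θ s ω))))
        - ∫ s in Set.Ici (0:ℝ), Tm s (F (Z (θ s ω) + Y₁ (θ s ω))))
    (hint : ∀ Z : Ω → H, (∃ c, ∀ ω, ‖Z ω‖ ≤ c) → ∀ ω,
      IntegrableOn (fun s => Tp s (F (Z (θ s ω) + Y₁ (θ s ω)))) (Set.Iic (0:ℝ)) ∧
      IntegrableOn (fun s => Tm s (F (Z (θ s ω) + Y₁ (θ s ω)))) (Set.Ici (0:ℝ))) :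
    (∀ Z : Ω → H, (∃ c, ∀ ω, ‖Z ω‖ ≤ c) → ∃ c', ∀ ω, ‖M Z ω‖ ≤ c') ∧
    (∀ Z₁ Z₂ : Ω → H, (∃ c, ∀ ω, ‖Z₁ ω‖ ≤ c) → (∃ c, ∀ ω, ‖Z₂ ω‖ ≤ c) →
      ∀ K : ℝ, (∀ ω, ‖Z₁ ω - Z₂ ω‖ ≤ K) →
        ∀ ω, ‖M Z₁ ω - M Z₂ ω‖ ≤ L * (μm1⁻¹ - μm⁻¹) * K) ∧
    (∃! Z₀ : {Z : Ω → H // ∃ c, ∀ ω, ‖Z ω‖ ≤ c}, M Z₀.1 = Z₀.1) := by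
  have hM' : ∀ Z ω, M Z ω = dichotomyIntegral Tp Tm fun s => F (Z (θ s ω) + Y₁ (θ s ω)) := hM
  have hbdd : ∀ Z : Ω → H, (∃ c, ∀ ω, ‖Z ω‖ ≤ c) → ∃ c', ∀ ω, ‖M Z ω‖ ≤ c' := by
    obtain ⟨C, hC⟩ := hFbd
    refine fun Z _ => ⟨(μm1⁻¹ - μm⁻¹) * C, fun ω => ?_⟩
    rw [hM']
    exact norm_dichotomyIntegral_le hμm hμm1 hTp hTm fun s => hC _
  have hlip : ∀ Z₁ Z₂ : Ω → H, (∃ c, ∀ ω, ‖Z₁ ω‖ ≤ c) → (∃ c, ∀ ω, ‖Z₂ ω‖ ≤ c) →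
      ∀ K : ℝ, (∀ ω, ‖Z₁ ω - Z₂ ω‖ ≤ K) →
        ∀ ω, ‖M Z₁ ω - M Z₂ ω‖ ≤ L * (μm1⁻¹ - μm⁻¹) * K := by
    intro Z₁ Z₂ h₁ h₂ K hK ω
    have hFK (s : ℝ) :
        ‖F (Z₁ (θ s ω) + Y₁ (θ s ω)) - F (Z₂ (θ s ω) + Y₁ (θ s ω))‖ ≤ L * K := by
      refine (hLip _ _).trans ?_
      rw [add_sub_add_right_eq_sub]
      exact mul_le_mul_of_nonneg_left (hK _) hL
    obtain ⟨hp₁, hm₁⟩ := hint Z₁ h₁ ω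
    obtain ⟨hp₂, hm₂⟩ := hint Z₂ h₂ ω
    rw [hM', hM', dichotomyIntegral_sub hp₁ hm₁ hp₂ hm₂]
    exact (norm_dichotomyIntegral_le hμm hμm1 hTp hTm hFK).trans_eq (by ring)
  exact ⟨hbdd, hlip, existsUnique_bounded_fixedPoint_of_contraction M hcontr hbdd hlip⟩
end

section
/- Suppose Y: Ω → H satisfies the integral identity Y(ω) = ∫_{−∞}^0 T_{−s} p⁺ F(Y(θ(s,ω))) ds − ∫_0^∞ T_{−s} p⁻ F(Y(θ(s,ω))) ds + Y₁(ω), where Y₁(θ(t,ω)) = T_t Y₁(ω) + ∫_0^t T_{t−s} B₀ dW(s)(ω) is the stationary Ornstein–Uhlenbeck-type term. Then for every t ≥ 0 and ω ∈ Ω, Y(θ(t,ω)) = T_t Y(ω) + ∫_0^t T_{t−s} F(Y(θ(s,ω))) ds + ∫_0^t T_{t−s} B₀ dW(s)(ω); that is, Y(θ(t,·)) solves the mild-solution variation-of-constants identity along the shift flow. -/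
/-!
Substituting `u = s + t` turns the Lyapunov–Perron integrals along the shifted orbit into
`∫_{-∞}^t T_{t-u} p⁺ g(u) du − ∫_t^∞ T_{t-u} p⁻ g(u) du`. Split at `0`: the parts over
`(-∞, 0]` and `[0, ∞)` are `T_t` applied to the unshifted integrals, because
`T_{t-u} = T_t T_{-u}`, and the two remaining pieces over `[0, t]` add up to
`∫_0^t T_{t-u} g(u) du` since `p⁺ + p⁻ = id`. The Ornstein–Uhlenbeck identity for `Y₁`
supplies the stochastic convolution.
-/

open MeasureTheory Set

section Translation

variable {E : Type*} [NormedAddCommGroup E]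

theorem setIntegral_comp_add_right [NormedSpace ℝ E] (f : ℝ → E) (t : ℝ) (s : Set ℝ) :
    ∫ x in (· + t) ⁻¹' s, f (x + t) = ∫ x in s, f x :=
  (measurePreserving_add_right volume t).setIntegral_preimage_emb
    (MeasurableEquiv.addRight t).measurableEmbedding f s

theorem integrableOn_comp_add_right_iff {f : ℝ → E} {t : ℝ} {s : Set ℝ} :
    IntegrableOn (fun x => f (x + t)) ((· + t) ⁻¹' s) ↔ IntegrableOn f s :=
  (measurePreserving_add_right volume t).integrableOn_comp_preimage
    (MeasurableEquiv.addRight t).measurableEmbedding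

end Translation

section LyapunovPerron

variable {H : Type*} [NormedAddCommGroup H] [NormedSpace ℝ H]
  {T A B C : ℝ → H →L[ℝ] H} {g : ℝ → H} {t : ℝ}

/-- The Lyapunov–Perron integral of `g`, for `A s = T_{-s} p⁺` and `B s = T_{-s} p⁻`. -/
noncomputable def lyapunovPerronIntegral (A B : ℝ → H →L[ℝ] H) (g : ℝ → H) : H :=
  (∫ s in Iic 0, A s (g s)) - ∫ s in Ici 0, B s (g s)

theorem lyapunovPerronIntegral_comp_add_right_eq_Iic_sub_Ici :
    lyapunovPerronIntegral A B (fun s => g (s + t)) =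
      (∫ u in Iic t, A (u - t) (g u)) - ∫ u in Ici t, B (u - t) (g u) := by
  have hA := setIntegral_comp_add_right (fun u => A (u - t) (g u)) t (Iic t)
  have hB := setIntegral_comp_add_right (fun u => B (u - t) (g u)) t (Ici t)
  simp only [preimage_add_const_Iic, preimage_add_const_Ici, sub_self, add_sub_cancel_right]
    at hA hB
  rw [lyapunovPerronIntegral, hA, hB]

theorem integrableOn_comp_sub_of_eq_comp (hC : ∀ s, C (s - t) = (T t).comp (C s)) {S : Set ℝ}
    (hCg : IntegrableOn (fun s => C s (g s)) S) :
    IntegrableOn (fun u => C (u - t) (g u)) S := by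
  simp only [hC, ContinuousLinearMap.comp_apply]
  exact (T t).integrable_comp hCg

theorem setIntegral_comp_sub_of_eq_comp [CompleteSpace H]
    (hC : ∀ s, C (s - t) = (T t).comp (C s)) {S : Set ℝ}
    (hCg : IntegrableOn (fun s => C s (g s)) S) :
    ∫ u in S, C (u - t) (g u) = T t (∫ u in S, C u (g u)) := by
  simpa only [hC, ContinuousLinearMap.comp_apply] using (T t).integral_comp_comm hCg

theorem setIntegral_Iic_comp_sub [CompleteSpace H] (hA : ∀ s, A (s - t) = (T t).comp (A s))
    (hAg : IntegrableOn (fun s => A s (g s)) (Iic 0))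
    (hAt : IntegrableOn (fun u => A (u - t) (g u)) (Iic t)) :
    ∫ u in Iic t, A (u - t) (g u) =
      T t (∫ s in Iic 0, A s (g s)) + ∫ u in 0..t, A (u - t) (g u) := by
  rw [← setIntegral_comp_sub_of_eq_comp hA hAg, ← intervalIntegral.integral_Iic_sub_Iic
    (integrableOn_comp_sub_of_eq_comp hA hAg) hAt, add_sub_cancel]

theorem setIntegral_Ici_comp_sub [CompleteSpace H] (hB : ∀ s, B (s - t) = (T t).comp (B s))
    (hBg : IntegrableOn (fun s => B s (g s)) (Ici 0)) (ht : 0 ≤ t) :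
    ∫ u in Ici t, B (u - t) (g u) =
      T t (∫ s in Ici 0, B s (g s)) - ∫ u in 0..t, B (u - t) (g u) := by
  have hBsub := integrableOn_comp_sub_of_eq_comp hB hBg
  rw [← setIntegral_comp_sub_of_eq_comp hB hBg, ← intervalIntegral.integral_Ici_sub_Ici' hBsub
    (hBsub.mono_set (Ici_subset_Ici.mpr ht)), sub_sub_cancel]

theorem intervalIntegral_comp_sub_add_eq_setIntegral
    (hsum : ∀ u, 0 ≤ u → T u = A (-u) + B (-u)) (ht : 0 ≤ t)
    (hA : IntervalIntegrable (fun u => A (u - t) (g u)) volume 0 t)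
    (hB : IntervalIntegrable (fun u => B (u - t) (g u)) volume 0 t) :
    (∫ u in 0..t, A (u - t) (g u)) + ∫ u in 0..t, B (u - t) (g u) =
      ∫ u in Icc 0 t, T (t - u) (g u) := by
  rw [← intervalIntegral.integral_add hA hB, integral_Icc_eq_integral_Ioc,
    ← intervalIntegral.integral_of_le ht]
  refine intervalIntegral.integral_congr fun u hu => ?_
  rw [uIcc_of_le ht] at hu
  simp only [hsum (t - u) (by linarith [hu.2]), neg_sub, add_apply]

theorem lyapunovPerronIntegral_comp_add_right [CompleteSpace H]
    (hA : ∀ s, A (s - t) = (T t).comp (A s)) (hB : ∀ s, B (s - t) = (T t).comp (B s))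
    (hsum : ∀ u, 0 ≤ u → T u = A (-u) + B (-u)) (ht : 0 ≤ t)
    (hAg : IntegrableOn (fun s => A s (g s)) (Iic 0))
    (hAg_shift : IntegrableOn (fun s => A s (g (s + t))) (Iic 0))
    (hBg : IntegrableOn (fun s => B s (g s)) (Ici 0)) :
    lyapunovPerronIntegral A B (fun s => g (s + t)) =
      T t (lyapunovPerronIntegral A B g) + ∫ u in Icc 0 t, T (t - u) (g u) := by
  have hAt : IntegrableOn (fun u => A (u - t) (g u)) (Iic t) := by
    rw [← integrableOn_comp_add_right_iff, preimage_add_const_Iic, sub_self]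
    simpa only [add_sub_cancel_right] using hAg_shift
  have hBsub := integrableOn_comp_sub_of_eq_comp hB hBg
  rw [lyapunovPerronIntegral_comp_add_right_eq_Iic_sub_Ici, setIntegral_Iic_comp_sub hA hAg hAt,
    setIntegral_Ici_comp_sub hB hBg ht, lyapunovPerronIntegral, map_sub,
    ← intervalIntegral_comp_sub_add_eq_setIntegral hsum ht
      ((intervalIntegrable_iff_integrableOn_Icc_of_le ht).mpr
        (hAt.mono_set Icc_subset_Iic_self))
      ((intervalIntegrable_iff_integrableOn_Icc_of_le ht).mpr
        (hBsub.mono_set Icc_subset_Ici_self))]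
  abel

end LyapunovPerron

theorem stationary_point_solves_mild_equation_general
    {Ω : Type*} {H : Type*} [NormedAddCommGroup H] [NormedSpace ℝ H]
    [CompleteSpace H]
    (θ : ℝ → Ω → Ω) (T A B : ℝ → H →L[ℝ] H) (F : H → H) (Y Y₁ : Ω → H)
    (I : ℝ → Ω → H)
    (hθgroup : ∀ t₁ t₂ : ℝ, ∀ ω, θ (t₁ + t₂) ω = θ t₂ (θ t₁ ω))
    (hA : ∀ t : ℝ, 0 ≤ t → ∀ s : ℝ, A (s - t) = (T t).comp (A s))
    (hB : ∀ t : ℝ, 0 ≤ t → ∀ s : ℝ, B (s - t) = (T t).comp (B s))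
    (hsum : ∀ u : ℝ, 0 ≤ u → T u = A (-u) + B (-u))
    (hint1 : ∀ ω, IntegrableOn (fun s => A s (F (Y (θ s ω)))) (Set.Iic (0:ℝ)))
    (hint2 : ∀ ω, IntegrableOn (fun s => B s (F (Y (θ s ω)))) (Set.Ici (0:ℝ)))
    (hY : ∀ ω, Y ω =
      (∫ s in Set.Iic (0:ℝ), A s (F (Y (θ s ω))))
        - (∫ s in Set.Ici (0:ℝ), B s (F (Y (θ s ω)))) + Y₁ ω)
    (hY₁ : ∀ t : ℝ, 0 ≤ t → ∀ ω, Y₁ (θ t ω) = T t (Y₁ ω) + I t ω) :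
    ∀ t : ℝ, 0 ≤ t → ∀ ω,
      Y (θ t ω) = T t (Y ω)
        + (∫ s in Set.Icc (0:ℝ) t, (T (t - s)) (F (Y (θ s ω)))) + I t ω := by
  intro t ht ω
  have hshift : ∀ s, F (Y (θ s (θ t ω))) = F (Y (θ (s + t) ω)) := fun s => by
    rw [add_comm, hθgroup]
  have hY' : ∀ ω, Y ω = lyapunovPerronIntegral A B (fun s => F (Y (θ s ω))) + Y₁ ω := hY
  have hperron := lyapunovPerronIntegral_comp_add_right (hA t ht) (hB t ht) hsum ht
    (hint1 ω) (by simpa only [hshift] using hint1 (θ t ω)) (hint2 ω)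
  rw [hY' (θ t ω), hY' ω]
  simp only [hshift]
  rw [hperron, hY₁ t ht ω, map_add]
  abel

/-- A solution `Y` of the integral identity
`Y(ω) = ∫_{-∞}^0 T_{-s}p⁺F(Y(θ(s,ω)))ds − ∫_0^∞ T_{-s}p⁻F(Y(θ(s,ω)))ds + Y₁(ω)`
satisfies the variation-of-constants (mild solution) identity along the flow.
Here `A s` stands for `T_{-s}p⁺`, `B s` for `T_{-s}p⁻`, and `I t ω` for the
stochastic convolution `∫_0^t T_{t-s}B₀ dW(s)(ω)`. -/
theorem stationary_point_solves_mild_equation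
    {Ω : Type*} {H : Type*} [NormedAddCommGroup H] [NormedSpace ℝ H]
    [CompleteSpace H]
    (θ : ℝ → Ω → Ω) (T A B : ℝ → H →L[ℝ] H) (F : H → H) (Y Y₁ : Ω → H)
    (I : ℝ → Ω → H)
    (hθgroup : ∀ t₁ t₂ : ℝ, ∀ ω, θ (t₁ + t₂) ω = θ t₂ (θ t₁ ω))
    (hθzero : ∀ ω, θ 0 ω = ω)
    (hT0 : T 0 = ContinuousLinearMap.id ℝ H)
    (hTsemi : ∀ s t : ℝ, 0 ≤ s → 0 ≤ t → T (s + t) = (T s).comp (T t))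
    (hA : ∀ t : ℝ, 0 ≤ t → ∀ s : ℝ, A (s - t) = (T t).comp (A s))
    (hB : ∀ t : ℝ, 0 ≤ t → ∀ s : ℝ, B (s - t) = (T t).comp (B s))
    (hsum : ∀ u : ℝ, 0 ≤ u → T u = A (-u) + B (-u))
    (hint1 : ∀ ω, IntegrableOn (fun s => A s (F (Y (θ s ω)))) (Set.Iic (0:ℝ)))
    (hint2 : ∀ ω, IntegrableOn (fun s => B s (F (Y (θ s ω)))) (Set.Ici (0:ℝ)))
    (hY : ∀ ω, Y ω =
      (∫ s in Set.Iic (0:ℝ), A s (F (Y (θ s ω))))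
        - (∫ s in Set.Ici (0:ℝ), B s (F (Y (θ s ω)))) + Y₁ ω)
    (hY₁ : ∀ t : ℝ, 0 ≤ t → ∀ ω, Y₁ (θ t ω) = T t (Y₁ ω) + I t ω) :
    ∀ t : ℝ, 0 ≤ t → ∀ ω,
      Y (θ t ω) = T t (Y ω)
        + (∫ s in Set.Icc (0:ℝ) t, (T (t - s)) (F (Y (θ s ω)))) + I t ω :=
  stationary_point_solves_mild_equation_general θ T A B F Y Y₁ I hθgroup hA hB hsum hint1 hint2 hY
    hY₁
end

section
/- Let g: ℝ⁺ × Ω → ℝ⁺ be nonnegative and subadditive along θ (g(t₁+t₂,ω) ≤ g(t₁,ω) + g(t₂,θ(t₁,ω))). Define g'(t,ω) := sup_{0≤s≤t} [g(s,ω) + g(t−s, θ(s,ω))]. Then g' is also subadditive along θ: g'(t₁+t₂,ω) ≤ g'(t₁,ω) + g'(t₂,θ(t₁,ω)) for all t₁,t₂ ≥ 0 and ω ∈ Ω. -/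
/-- If `g ≥ 0` is subadditive along the flow `θ`, then
`g'(t,ω) := sup_{0≤s≤t} [g(s,ω) + g(t−s,θ(s,ω))]` is also subadditive along
`θ`. -/
theorem sup_convolution_subadditive
    {Ω : Type*} (θ : ℝ → Ω → Ω) (g : ℝ → Ω → ℝ)
    (hθgroup : ∀ t₁ t₂ : ℝ, ∀ ω, θ (t₁ + t₂) ω = θ t₂ (θ t₁ ω))
    (hθzero : ∀ ω, θ 0 ω = ω)
    (hgnonneg : ∀ t : ℝ, 0 ≤ t → ∀ ω, 0 ≤ g t ω)
    (hsub : ∀ t₁ t₂ : ℝ, 0 ≤ t₁ → 0 ≤ t₂ → ∀ ω,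
      g (t₁ + t₂) ω ≤ g t₁ ω + g t₂ (θ t₁ ω))
    (hbdd : ∀ t : ℝ, 0 ≤ t → ∀ ω,
      BddAbove ((fun s => g s ω + g (t - s) (θ s ω)) '' Set.Icc 0 t)) :
    ∀ t₁ t₂ : ℝ, 0 ≤ t₁ → 0 ≤ t₂ → ∀ ω,
      sSup ((fun s => g s ω + g ((t₁ + t₂) - s) (θ s ω)) '' Set.Icc 0 (t₁ + t₂))
        ≤ sSup ((fun s => g s ω + g (t₁ - s) (θ s ω)) '' Set.Icc 0 t₁)
          + sSup ((fun s => g s (θ t₁ ω) + g (t₂ - s) (θ s (θ t₁ ω))) '' Set.Icc 0 t₂) := by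
  intro t₁ t₂ ht₁ ht₂ ω
  have hne : ((fun s => g s ω + g ((t₁ + t₂) - s) (θ s ω)) '' Set.Icc 0 (t₁ + t₂)).Nonempty := by
    refine ⟨_, ⟨0, ⟨le_refl _, by linarith⟩, rfl⟩⟩
  -- lower bounds for each sup by individual elements
  have hle1 : ∀ s ∈ Set.Icc (0:ℝ) t₁, g s ω + g (t₁ - s) (θ s ω)
      ≤ sSup ((fun s => g s ω + g (t₁ - s) (θ s ω)) '' Set.Icc 0 t₁) := by
    intro s hs
    exact le_csSup (hbdd t₁ ht₁ ω) ⟨s, hs, rfl⟩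
  have hle2 : ∀ s ∈ Set.Icc (0:ℝ) t₂, g s (θ t₁ ω) + g (t₂ - s) (θ s (θ t₁ ω))
      ≤ sSup ((fun s => g s (θ t₁ ω) + g (t₂ - s) (θ s (θ t₁ ω))) '' Set.Icc 0 t₂) := by
    intro s hs
    exact le_csSup (hbdd t₂ ht₂ (θ t₁ ω)) ⟨s, hs, rfl⟩
  refine Real.sSup_le ?_ ?_
  · rintro x ⟨s, ⟨hs0, hst⟩, rfl⟩
    by_cases hcase : s ≤ t₁
    · -- s ∈ [0, t₁]
      have h1 : g ((t₁ + t₂) - s) (θ s ω) ≤ g (t₁ - s) (θ s ω) + g t₂ (θ (t₁ - s) (θ s ω)) := by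
        have := hsub (t₁ - s) t₂ (by linarith) ht₂ (θ s ω)
        have heq : t₁ - s + t₂ = (t₁ + t₂) - s := by ring
        rwa [heq] at this
      have hθ : θ (t₁ - s) (θ s ω) = θ t₁ ω := by
        rw [← hθgroup s (t₁ - s) ω]; norm_num
      rw [hθ] at h1
      have h2 : g t₂ (θ t₁ ω) ≤ g 0 (θ t₁ ω) + g (t₂ - 0) (θ 0 (θ t₁ ω)) := by
        rw [hθzero, sub_zero]
        have := hgnonneg 0 le_rfl (θ t₁ ω)
        linarith
      calc g s ω + g ((t₁ + t₂) - s) (θ s ω)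
          ≤ (g s ω + g (t₁ - s) (θ s ω)) + g t₂ (θ t₁ ω) := by linarith
        _ ≤ _ := by
            refine add_le_add (hle1 s ⟨hs0, hcase⟩) (le_trans h2 (hle2 0 ⟨le_rfl, ht₂⟩))
    · -- s = t₁ + u with u ∈ (0, t₂]
      push_neg at hcase
      set u := s - t₁ with hu
      have hu0 : 0 ≤ u := by simp [hu]; linarith
      have hut₂ : u ≤ t₂ := by simp [hu]; linarith
      have hsu : s = t₁ + u := by simp [hu]
      have h1 : g s ω ≤ g t₁ ω + g u (θ t₁ ω) := by
        rw [hsu]; exact hsub t₁ u ht₁ hu0 ω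
      have hθ : θ s ω = θ u (θ t₁ ω) := by rw [hsu, hθgroup]
      have heq : (t₁ + t₂) - s = t₂ - u := by rw [hsu]; ring
      have h2 : g t₁ ω ≤ g t₁ ω + g (t₁ - t₁) (θ t₁ ω) := by
        have := hgnonneg (t₁ - t₁) (by norm_num) (θ t₁ ω)
        linarith
      calc g s ω + g ((t₁ + t₂) - s) (θ s ω)
          ≤ g t₁ ω + (g u (θ t₁ ω) + g (t₂ - u) (θ u (θ t₁ ω))) := by
            rw [hθ, heq]; linarith
        _ ≤ _ := add_le_add (le_trans h2 (hle1 t₁ ⟨ht₁, le_rfl⟩))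
              (hle2 u ⟨hu0, hut₂⟩)
  · have a1 : (0:ℝ) ≤ sSup ((fun s => g s ω + g (t₁ - s) (θ s ω)) '' Set.Icc 0 t₁) := by
      refine le_trans ?_ (hle1 0 ⟨le_rfl, ht₁⟩)
      have h1 := hgnonneg 0 le_rfl ω
      have h2 := hgnonneg (t₁ - 0) (by linarith) (θ 0 ω)
      linarith
    have a2 : (0:ℝ) ≤ sSup ((fun s => g s (θ t₁ ω) + g (t₂ - s) (θ s (θ t₁ ω))) '' Set.Icc 0 t₂) := by
      refine le_trans ?_ (hle2 0 ⟨le_rfl, ht₂⟩)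
      have h1 := hgnonneg 0 le_rfl (θ t₁ ω)
      have h2 := hgnonneg (t₂ - 0) (by linarith) (θ 0 (θ t₁ ω))
      linarith
    linarith
end

section
/- Let (U,θ) be a perfect cocycle on H with stationary point Y, let S̃(ω) be a family of subsets of H, and suppose: (1) for all ω in a θ-invariant sure event and x ∈ S̃(ω), |U(t,x,ω) − Y(θ(t,ω))| ≤ β^{ε'}(ω) e^{(λ+ε')t} for all t ≥ 0 with λ + ε' < 0; (2) S̃(θ(t,ω)) contains all points z with |U(n,z,θ(t,ω)) − Y(θ(n+t,ω))| ≤ β₁(θ(t,ω)) e^{(λ+ε₁)n} for all integers n ≥ 0 and |z − Y(θ(t,ω))| ≤ ρ₁(θ(t,ω)); (3) the radii satisfy ρ₁(θ(t,ω)) ≥ ρ₁(ω)e^{(λ+ε₁)t} and β₁(θ(t,ω)) ≥ β₁(ω)e^{(λ+ε₁)t} with 0 < ε' < ε₁. Then there exists τ₁(ω) ≥ 0 such that U(t,·,ω)(S̃(ω)) ⊆ S̃(θ(t,ω)) for all t ≥ τ₁(ω). -/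
/-!
Along an orbit starting in `S̃(ω)`, the cocycle property turns the decay estimate at `ω` into
one at `θ(t,ω)` with constant `β'(ω)e^{(λ+ε')t}`. Since `ε' < ε₁`, this constant is eventually
below `β₁(ω)e^{(λ+ε₁)t} ≤ β₁(θ(t,ω))` and `ρ₁(ω)e^{(λ+ε₁)t} ≤ ρ₁(θ(t,ω))`, so `U(t,x,ω)` meets
the sufficient condition (2) for membership in `S̃(θ(t,ω))`.
-/

open MeasureTheory Filter Real

lemma eventually_mul_exp_le_mul_exp {a b : ℝ} (hab : a < b) (B : ℝ) {m : ℝ} (hm : 0 < m) :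
    ∀ᶠ t in atTop, B * exp (a * t) ≤ m * exp (b * t) := by
  have hgrow : Tendsto (fun t => m * exp ((b - a) * t)) atTop atTop :=
    (tendsto_exp_atTop.comp (tendsto_id.const_mul_atTop (sub_pos.2 hab))).const_mul_atTop hm
  filter_upwards [hgrow.eventually_ge_atTop B] with t ht
  calc B * exp (a * t) ≤ m * exp ((b - a) * t) * exp (a * t) := by gcongr
    _ = m * exp (b * t) := by rw [mul_assoc, ← exp_add]; ring_nf

lemma norm_cocycle_shift_sub_le {Ω H : Type*} [SeminormedAddCommGroup H]
    {θ : ℝ → Ω → Ω} {U : ℝ → H → Ω → H} {Y : Ω → H}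
    (hU : ∀ t₁ t₂ : ℝ, 0 ≤ t₁ → 0 ≤ t₂ → ∀ x ω, U (t₁ + t₂) x ω = U t₂ (U t₁ x ω) (θ t₁ ω))
    {x : H} {ω : Ω} {B a : ℝ}
    (hdecay : ∀ s : ℝ, 0 ≤ s → ‖U s x ω - Y (θ s ω)‖ ≤ B * exp (a * s))
    {t s : ℝ} (ht : 0 ≤ t) (hs : 0 ≤ s) :
    ‖U s (U t x ω) (θ t ω) - Y (θ (s + t) ω)‖ ≤ B * exp (a * t) * exp (a * s) := by
  rw [← hU t s ht hs, add_comm s t, mul_assoc, ← exp_add, ← mul_add]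
  exact hdecay (t + s) (add_nonneg ht hs)

theorem stable_manifold_asymptotic_invariance_general
    {Ω : Type*}
    {H : Type*} [NormedAddCommGroup H]
    (θ : ℝ → Ω → Ω) (U : ℝ → H → Ω → H) (Y : Ω → H) (S : Ω → Set H)
    (E : Set Ω)
    (lam ε' ε₁ : ℝ) (hεε : ε' < ε₁)
    (β' β₁ ρ₁ : Ω → ℝ)
    (hβ₁ : ∀ ω, β₁ ω ∈ Set.Ioo (0:ℝ) 1)
    (hρ₁ : ∀ ω, ρ₁ ω ∈ Set.Ioo (0:ℝ) 1)
    (hUcocycle : ∀ t₁ t₂ : ℝ, 0 ≤ t₁ → 0 ≤ t₂ → ∀ x ω,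
      U (t₁ + t₂) x ω = U t₂ (U t₁ x ω) (θ t₁ ω))
    (h1 : ∀ ω ∈ E, ∀ x ∈ S ω, ∀ t : ℝ, 0 ≤ t →
      ‖U t x ω - Y (θ t ω)‖ ≤ β' ω * Real.exp ((lam + ε') * t))
    (h2 : ∀ ω ∈ E, ∀ t : ℝ, 0 ≤ t → ∀ z : H,
      (∀ n : ℕ, ‖U n z (θ t ω) - Y (θ ((n : ℝ) + t) ω)‖
        ≤ β₁ (θ t ω) * Real.exp ((lam + ε₁) * n)) →
      ‖z - Y (θ t ω)‖ ≤ ρ₁ (θ t ω) → z ∈ S (θ t ω))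
    (h3 : ∀ ω ∈ E, ∀ t : ℝ, 0 ≤ t →
      ρ₁ ω * Real.exp ((lam + ε₁) * t) ≤ ρ₁ (θ t ω) ∧
      β₁ ω * Real.exp ((lam + ε₁) * t) ≤ β₁ (θ t ω)) :
    ∀ ω ∈ E, ∃ τ : ℝ, 0 ≤ τ ∧ ∀ t : ℝ, τ ≤ t → ∀ x ∈ S ω,
      U t x ω ∈ S (θ t ω) := by
  intro ω hω
  have hrate : lam + ε' < lam + ε₁ := by linarith
  obtain ⟨τ, hτ⟩ := eventually_atTop.1 <| (eventually_ge_atTop 0).and <|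
    (eventually_mul_exp_le_mul_exp hrate (β' ω) (hβ₁ ω).1).and
      (eventually_mul_exp_le_mul_exp hrate (β' ω) (hρ₁ ω).1)
  refine ⟨max τ 0, le_max_right _ _, fun t ht x hx => ?_⟩
  obtain ⟨ht0, hβt, hρt⟩ := hτ t (le_of_max_le_left ht)
  obtain ⟨hρθ, hβθ⟩ := h3 ω hω t ht0
  apply h2 ω hω t ht0
  · intro n
    calc _ ≤ β' ω * exp ((lam + ε') * t) * exp ((lam + ε') * n) :=
          norm_cocycle_shift_sub_le hUcocycle (h1 ω hω x hx) ht0 n.cast_nonneg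
      _ ≤ β₁ (θ t ω) * exp ((lam + ε₁) * n) := by
          gcongr
          · exact (hβ₁ _).1.le
          · exact hβt.trans hβθ
  · exact (h1 ω hω x hx t ht0).trans (hρt.trans hρθ)

/-- Asymptotic invariance of the local stable manifolds: under
the exponential estimates (1)-(3) there is a random time `τ₁(ω) ≥ 0` such that
`U(t,·,ω)(S̃(ω)) ⊆ S̃(θ(t,ω))` for all `t ≥ τ₁(ω)`. -/
theorem stable_manifold_asymptotic_invariance
    {Ω : Type*} [MeasurableSpace Ω] (P : Measure Ω) [IsProbabilityMeasure P]
    {H : Type*} [NormedAddCommGroup H] [InnerProductSpace ℝ H]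
    (θ : ℝ → Ω → Ω) (U : ℝ → H → Ω → H) (Y : Ω → H) (S : Ω → Set H)
    (E : Set Ω) (hE : P E = 1) (hEinv : ∀ t : ℝ, θ t '' E = E)
    (lam ε' ε₁ : ℝ) (hneg : lam + ε' < 0) (hε' : 0 < ε') (hεε : ε' < ε₁)
    (β' β₁ ρ₁ : Ω → ℝ)
    (hβ' : ∀ ω, β' ω ∈ Set.Ioo (0:ℝ) 1) (hβ₁ : ∀ ω, β₁ ω ∈ Set.Ioo (0:ℝ) 1)
    (hρ₁ : ∀ ω, ρ₁ ω ∈ Set.Ioo (0:ℝ) 1)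
    (hθgroup : ∀ t₁ t₂ : ℝ, ∀ ω, θ (t₁ + t₂) ω = θ t₂ (θ t₁ ω))
    (hθzero : ∀ ω, θ 0 ω = ω)
    (hUcocycle : ∀ t₁ t₂ : ℝ, 0 ≤ t₁ → 0 ≤ t₂ → ∀ x ω,
      U (t₁ + t₂) x ω = U t₂ (U t₁ x ω) (θ t₁ ω))
    (hY : ∀ t : ℝ, 0 ≤ t → ∀ ω, U t (Y ω) ω = Y (θ t ω))
    (h1 : ∀ ω ∈ E, ∀ x ∈ S ω, ∀ t : ℝ, 0 ≤ t →
      ‖U t x ω - Y (θ t ω)‖ ≤ β' ω * Real.exp ((lam + ε') * t))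
    (h2 : ∀ ω ∈ E, ∀ t : ℝ, 0 ≤ t → ∀ z : H,
      (∀ n : ℕ, ‖U n z (θ t ω) - Y (θ ((n : ℝ) + t) ω)‖
        ≤ β₁ (θ t ω) * Real.exp ((lam + ε₁) * n)) →
      ‖z - Y (θ t ω)‖ ≤ ρ₁ (θ t ω) → z ∈ S (θ t ω))
    (h3 : ∀ ω ∈ E, ∀ t : ℝ, 0 ≤ t →
      ρ₁ ω * Real.exp ((lam + ε₁) * t) ≤ ρ₁ (θ t ω) ∧
      β₁ ω * Real.exp ((lam + ε₁) * t) ≤ β₁ (θ t ω)) :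
    ∀ ω ∈ E, ∃ τ : ℝ, 0 ≤ τ ∧ ∀ t : ℝ, τ ≤ t → ∀ x ∈ S ω,
      U t x ω ∈ S (θ t ω) :=
  stable_manifold_asymptotic_invariance_general θ U Y S E lam ε' ε₁ hεε β' β₁ ρ₁ hβ₁ hρ₁ hUcocycle
    h1 h2 h3
end
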